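/- arXiv:1902.04507 — 2 statements merged into one kernel-verified Lean document; each statement's English description precedes it below -/
import Mathlib

section
/- Let $f : \mathbb{R}^n \to \mathbb{R}^n$ be $C^\infty$ and suppose $\mathcal{L}_f^N \mathrm{id} = \sum_{i=0}^{N-1} \Lambda_i \mathcal{L}_f^i \mathrm{id}$ for some matrices $\Lambda_i \in \mathbb{R}^{n\times n}$. If $\psi : I \to \mathbb{R}^n$ solves $\dot \psi = f(\psi)$, then the curve $Y(t) = (\psi(t), \mathcal{L}_f^1\mathrm{id}(\psi(t)), \dots, \mathcal{L}_f^{N-1}\mathrm{id}(\psi(t))) \in \mathbb{R}^{nN}$ solves the linear ODE $\dot Y = AY$, where $A$ is the block companion matrix with identity superdiagonal blocks and last block row $(\Lambda_0, \dots, \Lambda_{N-1})$. -/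
/-- Iterated Lie derivative along `f` of a vector-valued map `g`. -/
noncomputable def lieDeriv {n m : ℕ} (f : (Fin n → ℝ) → (Fin n → ℝ)) :
    ℕ → ((Fin n → ℝ) → (Fin m → ℝ)) → ((Fin n → ℝ) → (Fin m → ℝ))
  | 0, g => g
  | k + 1, g => fun x => fderiv ℝ (lieDeriv f k g) x (f x)

lemma lieDeriv_contDiff {n m : ℕ} {f : (Fin n → ℝ) → (Fin n → ℝ)} (hf : ContDiff ℝ (⊤ : ℕ∞) f)
    {g : (Fin n → ℝ) → (Fin m → ℝ)} (hg : ContDiff ℝ (⊤ : ℕ∞) g) (k : ℕ) :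
    ContDiff ℝ (⊤ : ℕ∞) (lieDeriv f k g) := by
  induction k with
  | zero => exact hg
  | succ k ih =>
    show ContDiff ℝ (⊤ : ℕ∞) fun x => fderiv ℝ (lieDeriv f k g) x (f x)
    exact (ih.fderiv_right (by simp)).clm_apply hf

lemma lieDeriv_hasDerivAt {n m : ℕ} {f : (Fin n → ℝ) → (Fin n → ℝ)} (hf : ContDiff ℝ (⊤ : ℕ∞) f)
    {g : (Fin n → ℝ) → (Fin m → ℝ)} (hg : ContDiff ℝ (⊤ : ℕ∞) g) (k : ℕ)
    {ψ : ℝ → Fin n → ℝ} {t : ℝ} (hψ : HasDerivAt ψ (f (ψ t)) t) :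
    HasDerivAt (fun s => lieDeriv f k g (ψ s)) (lieDeriv f (k+1) g (ψ t)) t := by
  have h := ((lieDeriv_contDiff hf hg k).differentiable (by simp) (ψ t)).hasFDerivAt
  exact h.comp_hasDerivAt t hψ

/-- Polyflow embedding: the curve of iterated Lie derivatives along a trajectory of `ẋ = f(x)`
solves the block companion linear ODE (identity superdiagonal blocks, last block row
`(Λ₀, …, Λ_{N-1})`). -/
theorem polyflow_embedding (n N : ℕ) (hN : 1 ≤ N) (f : (Fin n → ℝ) → (Fin n → ℝ))
    (hf : ContDiff ℝ (⊤ : ℕ∞) f) (Λ : Fin N → Matrix (Fin n) (Fin n) ℝ)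
    (hrel : ∀ x, lieDeriv f N id x = ∑ i : Fin N, (Λ i).mulVec (lieDeriv f i id x))
    (a b : ℝ) (ψ : ℝ → Fin n → ℝ)
    (hψ : ∀ t ∈ Set.Ioo a b, HasDerivAt ψ (f (ψ t)) t)
    (Y : ℝ → Fin N → Fin n → ℝ)
    (hY : ∀ t, ∀ j : Fin N, Y t j = lieDeriv f j id (ψ t)) :
    ∀ t ∈ Set.Ioo a b, ∀ j : Fin N,
      HasDerivAt (fun s => Y s j)
        (if h : (j : ℕ) + 1 < N then Y t ⟨(j : ℕ) + 1, h⟩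
         else ∑ i : Fin N, (Λ i).mulVec (Y t i)) t := by
  intro t ht j
  have hfun : (fun s => Y s j) = fun s => lieDeriv f j id (ψ s) := by
    funext s; exact hY s j
  have hd := lieDeriv_hasDerivAt hf contDiff_id (j : ℕ) (hψ t ht)
  rw [hfun]
  convert hd using 1
  by_cases h : (j : ℕ) + 1 < N
  · rw [dif_pos h, hY t ⟨(j : ℕ) + 1, h⟩]
  · rw [dif_neg h]
    have hj : (j : ℕ) + 1 = N := Nat.le_antisymm j.2 (Nat.not_lt.mp h)
    rw [show (j : ℕ) + 1 = N from hj, hrel (ψ t)]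
    exact Finset.sum_congr rfl fun i _ => by rw [hY t i]
end

section
/- Consider the planar system $\dot x_1 = x_1 + 2x_2^2 + x_2^3 - x_2^4$, $\dot x_2 = -x_2$, with vector field $f(x_1, x_2) = (x_1 + 2x_2^2 + x_2^3 - x_2^4,\ -x_2)$. Then the iterated Lie derivative $\mathcal{L}_f^4 \mathrm{id}$ lies in the real span (with constant matrix coefficients) of $\{\mathcal{L}_f^i \mathrm{id} : 0 \leq i \leq 3\}$; i.e., there exist matrices $\Lambda_0, \Lambda_1, \Lambda_2, \Lambda_3 \in \mathbb{R}^{2\times 2}$ with $\mathcal{L}_f^4 \mathrm{id} = \sum_{i=0}^3 \Lambda_i \mathcal{L}_f^i \mathrm{id}$, so the system is a 4-polyflow. -/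
def myF : (Fin 2 → ℝ) → (Fin 2 → ℝ) :=
  fun x : Fin 2 → ℝ => ![x 0 + 2 * (x 1) ^ 2 + (x 1) ^ 3 - (x 1) ^ 4, -x 1]

def G (a b c e : ℝ) : (Fin 2 → ℝ) → (Fin 2 → ℝ) :=
  fun x => ![x 0 + a * (x 1) ^ 2 + b * (x 1) ^ 3 + c * (x 1) ^ 4, e * x 1]

noncomputable def D (a b c e : ℝ) (x : Fin 2 → ℝ) : (Fin 2 → ℝ) →L[ℝ] (Fin 2 → ℝ) :=
  ContinuousLinearMap.pi
    ![ContinuousLinearMap.proj 0 +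
        (2 * a * (x 1) + 3 * b * (x 1) ^ 2 + 4 * c * (x 1) ^ 3) • ContinuousLinearMap.proj 1,
      e • ContinuousLinearMap.proj 1]

lemma hasG (a b c e : ℝ) (x : Fin 2 → ℝ) : HasFDerivAt (G a b c e) (D a b c e x) x := by
  rw [hasFDerivAt_pi']
  intro i
  have h0 : HasFDerivAt (fun x : Fin 2 → ℝ => x 0)
      (ContinuousLinearMap.proj 0 : (Fin 2 → ℝ) →L[ℝ] ℝ) x := hasFDerivAt_apply 0 x
  have h1 : HasFDerivAt (fun x : Fin 2 → ℝ => x 1)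
      (ContinuousLinearMap.proj 1 : (Fin 2 → ℝ) →L[ℝ] ℝ) x := hasFDerivAt_apply 1 x
  fin_cases i
  · have hmul2 := h1.mul h1
    have hmul3 := hmul2.mul h1
    have hmul4 := hmul2.mul hmul2
    have h := ((h0.add (hmul2.const_mul a)).add (hmul3.const_mul b)).add
      (hmul4.const_mul c)
    have e1 : (fun x : Fin 2 → ℝ => G a b c e x 0) =
        fun x : Fin 2 → ℝ => x 0 + a * (x 1 * x 1) + b * (x 1 * x 1 * x 1) +
          c * (x 1 * x 1 * (x 1 * x 1)) := by
      funext x; simp [G]; ring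
    show HasFDerivAt (fun x : Fin 2 → ℝ => G a b c e x 0)
      ((ContinuousLinearMap.proj 0).comp (D a b c e x)) x
    refine e1 ▸ h.congr_fderiv ?_
    ext v
    simp [D, Matrix.cons_val_zero]
    ring
  · have h := h1.const_mul e
    have e2 : (fun x : Fin 2 → ℝ => G a b c e x 1) = fun x : Fin 2 → ℝ => e * x 1 := by
      funext x; simp [G]
    show HasFDerivAt (fun x : Fin 2 → ℝ => G a b c e x 1)
      ((ContinuousLinearMap.proj 1).comp (D a b c e x)) x
    refine e2 ▸ h.congr_fderiv ?_
    ext v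
    simp [D]

lemma fderiv_G_apply (a b c e : ℝ) (x v : Fin 2 → ℝ) :
    fderiv ℝ (G a b c e) x v =
      ![v 0 + (2 * a * (x 1) + 3 * b * (x 1) ^ 2 + 4 * c * (x 1) ^ 3) * v 1, e * v 1] := by
  rw [(hasG a b c e x).fderiv]
  funext i
  fin_cases i <;> simp [D]

lemma step (k : ℕ) (a b c e : ℝ) (h : lieDeriv myF k id = G a b c e) :
    lieDeriv myF (k + 1) id = G (2 - 2 * a) (1 - 3 * b) (-1 - 4 * c) (-e) := by
  funext x
  show fderiv ℝ (lieDeriv myF k id) x (myF x) = _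
  rw [h, fderiv_G_apply]
  funext i
  fin_cases i <;> simp [myF, G] <;> ring

lemma L0 : lieDeriv myF 0 id = G 0 0 0 1 := by
  funext x
  show x = _
  funext i
  fin_cases i <;> simp [G]

lemma L4 : lieDeriv myF 4 id = G (-10) (-20) 51 1 := by
  have h1 := step 0 0 0 0 1 L0
  have h2 := step 1 _ _ _ _ h1
  have h3 := step 2 _ _ _ _ h2
  have h4 := step 3 _ _ _ _ h3
  norm_num at h1 h2 h3 h4
  exact h4

/-- The planar system `ẋ₁ = x₁ + 2x₂² + x₂³ - x₂⁴`, `ẋ₂ = -x₂` is a 4-polyflow. -/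
theorem example_is_4_polyflow :
    ∃ Λ : Fin 4 → Matrix (Fin 2) (Fin 2) ℝ,
      ∀ x : Fin 2 → ℝ,
        lieDeriv (fun x : Fin 2 → ℝ =>
            ![x 0 + 2 * (x 1) ^ 2 + (x 1) ^ 3 - (x 1) ^ 4, -x 1]) 4 id x =
          ∑ i : Fin 4, (Λ i).mulVec
            (lieDeriv (fun x : Fin 2 → ℝ =>
              ![x 0 + 2 * (x 1) ^ 2 + (x 1) ^ 3 - (x 1) ^ 4, -x 1]) i id x) := by
  refine ⟨![!![24, 0; 0, 1], !![2, 0; 0, 0], !![-17, 0; 0, 0], !![-8, 0; 0, 0]], fun x => ?_⟩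
  have h1 := step 0 0 0 0 1 L0
  have h2 := step 1 _ _ _ _ h1
  have h3 := step 2 _ _ _ _ h2
  norm_num at h1 h2 h3
  simp only [show (fun x : Fin 2 → ℝ =>
      ![x 0 + 2 * (x 1) ^ 2 + (x 1) ^ 3 - (x 1) ^ 4, -x 1]) = myF from rfl]
  rw [Fin.sum_univ_four]
  have e0 : lieDeriv myF ((0 : Fin 4) : ℕ) id = G 0 0 0 1 := L0
  have e1 : lieDeriv myF ((1 : Fin 4) : ℕ) id = G 2 1 (-1) (-1) := h1
  have e2 : lieDeriv myF ((2 : Fin 4) : ℕ) id = G (-2) (-2) 3 1 := h2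
  have e3 : lieDeriv myF ((3 : Fin 4) : ℕ) id = G 6 7 (-13) (-1) := h3
  rw [L4, e0, e1, e2, e3]
  funext i
  fin_cases i <;>
    simp [G, Matrix.mulVec, dotProduct, Fin.sum_univ_two] <;> ring
end
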